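/- arXiv:1804.02778 — 9 statements merged into one kernel-verified Lean document; each statement's English description precedes it below -/
import Mathlib

section
/- Let H : ℝ³ → ℝ³ be a twice continuously differentiable vector field with div H = 0 and curl H = 0 everywhere, and let k > 0. Then the potential U(x) = -k‖H(x)‖² satisfies ΔU(x) = -2k‖DH(x)‖_F² at every point x, where DH(x) is the (total) derivative of H at x and ‖·‖_F is the Frobenius norm; in particular ΔU(x) ≤ 0 for all x. -/
/-- Partial derivative of a scalar field on `ℝ³` in the `i`-th coordinate direction. -/
noncomputable def pderiv3 (i : Fin 3) (f : EuclideanSpace ℝ (Fin 3) → ℝ)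
    (x : EuclideanSpace ℝ (Fin 3)) : ℝ :=
  fderiv ℝ f x (EuclideanSpace.single i 1)

/-- Laplacian of a scalar field on `ℝ³`: sum of the second partials. -/
noncomputable def laplacian3 (f : EuclideanSpace ℝ (Fin 3) → ℝ)
    (x : EuclideanSpace ℝ (Fin 3)) : ℝ :=
  ∑ i : Fin 3, pderiv3 i (pderiv3 i f) x

/-- Divergence of a vector field on `ℝ³`. -/
noncomputable def div3 (H : EuclideanSpace ℝ (Fin 3) → EuclideanSpace ℝ (Fin 3))
    (x : EuclideanSpace ℝ (Fin 3)) : ℝ :=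
  ∑ i : Fin 3, pderiv3 i (fun y => H y i) x

/-- Curl of a vector field on `ℝ³`, componentwise. -/
noncomputable def curl3 (H : EuclideanSpace ℝ (Fin 3) → EuclideanSpace ℝ (Fin 3))
    (x : EuclideanSpace ℝ (Fin 3)) : Fin 3 → ℝ :=
  ![pderiv3 1 (fun y => H y 2) x - pderiv3 2 (fun y => H y 1) x,
    pderiv3 2 (fun y => H y 0) x - pderiv3 0 (fun y => H y 2) x,
    pderiv3 0 (fun y => H y 1) x - pderiv3 1 (fun y => H y 0) x]

/-- Squared Frobenius norm of the derivative of a vector field on `ℝ³`: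
the sum of the squares of all first partial derivatives of its components. -/
noncomputable def frobSqDeriv3 (H : EuclideanSpace ℝ (Fin 3) → EuclideanSpace ℝ (Fin 3))
    (x : EuclideanSpace ℝ (Fin 3)) : ℝ :=
  ∑ i : Fin 3, ∑ j : Fin 3, (pderiv3 i (fun y => H y j) x) ^ 2

/-!
Write `‖H‖² = ∑ⱼ Hⱼ²`. The product rule gives `Δ‖H‖² = 2 ‖DH‖_F² + 2 ∑ⱼ Hⱼ ΔHⱼ`, and every
component `Hⱼ` is harmonic: curl-freeness makes the Jacobian symmetric, so by Schwarz
`ΔHⱼ = ∑ᵢ ∂ᵢ∂ᵢHⱼ = ∑ᵢ ∂ᵢ∂ⱼHᵢ = ∂ⱼ(div H) = 0`. Hence `ΔU = -k Δ‖H‖² = -2k ‖DH‖_F² ≤ 0`.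
-/

open Finset

local notation "ℝ³" => EuclideanSpace ℝ (Fin 3)

section ScalarField

variable {f g : ℝ³ → ℝ} {x : ℝ³}

lemma pderiv3_const_mul (i : Fin 3) (c : ℝ) (hf : DifferentiableAt ℝ f x) :
    pderiv3 i (fun y => c * f y) x = c * pderiv3 i f x := by
  simp [pderiv3, fderiv_const_mul hf]

lemma pderiv3_mul (i : Fin 3) (hf : DifferentiableAt ℝ f x) (hg : DifferentiableAt ℝ g x) :
    pderiv3 i (fun y => f y * g y) x = pderiv3 i f x * g x + f x * pderiv3 i g x := by
  simp only [pderiv3, fderiv_fun_mul hf hg, add_apply, smul_apply, smul_eq_mul]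
  ring

lemma pderiv3_add (i : Fin 3) (hf : DifferentiableAt ℝ f x) (hg : DifferentiableAt ℝ g x) :
    pderiv3 i (fun y => f y + g y) x = pderiv3 i f x + pderiv3 i g x := by
  simp [pderiv3, fderiv_fun_add hf hg]

lemma pderiv3_sum (i : Fin 3) {ι : Type*} (s : Finset ι) {F : ι → ℝ³ → ℝ}
    (hF : ∀ j ∈ s, DifferentiableAt ℝ (F j) x) :
    pderiv3 i (fun y => ∑ j ∈ s, F j y) x = ∑ j ∈ s, pderiv3 i (F j) x := by
  simp [pderiv3, fderiv_fun_sum hF]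

lemma ContDiff.pderiv3 {n : WithTop ℕ∞} (i : Fin 3) (hf : ContDiff ℝ (n + 1) f) :
    ContDiff ℝ n (pderiv3 i f) :=
  (hf.fderiv_right le_rfl).clm_apply contDiff_const

lemma ContDiff.differentiable_pderiv3 (i : Fin 3) (hf : ContDiff ℝ 2 f) :
    Differentiable ℝ (_root_.pderiv3 i f) :=
  (hf.pderiv3 (n := 1) i).differentiable one_ne_zero

lemma pderiv3_comm (i j : Fin 3) (hf : ContDiff ℝ 2 f) (x : ℝ³) :
    pderiv3 i (pderiv3 j f) x = pderiv3 j (pderiv3 i f) x := by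
  have hdf : Differentiable ℝ (fderiv ℝ f) :=
    (hf.fderiv_right (m := 1) le_rfl).differentiable one_ne_zero
  have hsecond : ∀ v w : ℝ³, fderiv ℝ (fun y => fderiv ℝ f y v) x w
      = fderiv ℝ (fderiv ℝ f) x w v := fun v w => by
    simp [fderiv_clm_apply (hdf x) (differentiableAt_const v)]
  unfold pderiv3
  rw [hsecond, hsecond, hf.contDiffAt.isSymmSndFDerivAt (by simp)]

lemma laplacian3_const_mul (c : ℝ) (hf : ContDiff ℝ 2 f) (x : ℝ³) :
    laplacian3 (fun y => c * f y) x = c * laplacian3 f x := by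
  have hfirst : ∀ i, pderiv3 i (fun y => c * f y) = fun y => c * pderiv3 i f y := fun i =>
    funext fun y => pderiv3_const_mul i c (hf.differentiable two_ne_zero y)
  simp only [laplacian3, hfirst, mul_sum]
  exact sum_congr rfl fun i _ =>
    pderiv3_const_mul i c (hf.differentiable_pderiv3 i x)

lemma laplacian3_mul (hf : ContDiff ℝ 2 f) (hg : ContDiff ℝ 2 g) (x : ℝ³) :
    laplacian3 (fun y => f y * g y) x
      = laplacian3 f x * g x + 2 * ∑ i, pderiv3 i f x * pderiv3 i g x + f x * laplacian3 g x := by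
  have df := hf.differentiable two_ne_zero
  have dg := hg.differentiable two_ne_zero
  have ddf : ∀ i, Differentiable ℝ (pderiv3 i f) := (hf.differentiable_pderiv3 ·)
  have ddg : ∀ i, Differentiable ℝ (pderiv3 i g) := (hg.differentiable_pderiv3 ·)
  have hfirst : ∀ i, pderiv3 i (fun y => f y * g y)
      = fun y => pderiv3 i f y * g y + f y * pderiv3 i g y := fun i =>
    funext fun y => pderiv3_mul i (df y) (dg y)
  have hsecond : ∀ i, pderiv3 i (pderiv3 i (fun y => f y * g y)) x
      = pderiv3 i (pderiv3 i f) x * g x + 2 * (pderiv3 i f x * pderiv3 i g x)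
        + f x * pderiv3 i (pderiv3 i g) x := fun i => by
    rw [hfirst, pderiv3_add i (((ddf i).fun_mul dg) x) ((df.fun_mul (ddg i)) x),
      pderiv3_mul i (ddf i x) (dg x), pderiv3_mul i (df x) (ddg i x)]
    ring
  simp only [laplacian3, hsecond, sum_add_distrib, ← mul_sum, sum_mul]

lemma laplacian3_sum {ι : Type*} (s : Finset ι) {F : ι → ℝ³ → ℝ}
    (hF : ∀ j ∈ s, ContDiff ℝ 2 (F j)) (x : ℝ³) :
    laplacian3 (fun y => ∑ j ∈ s, F j y) x = ∑ j ∈ s, laplacian3 (F j) x := by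
  have hfirst : ∀ i, pderiv3 i (fun y => ∑ j ∈ s, F j y) = fun y => ∑ j ∈ s, pderiv3 i (F j) y :=
    fun i => funext fun y => pderiv3_sum i s fun j hj => (hF j hj).differentiable two_ne_zero y
  simp only [laplacian3, hfirst]
  rw [sum_comm]
  exact sum_congr rfl fun i _ => pderiv3_sum i s fun j hj => (hF j hj).differentiable_pderiv3 i x

end ScalarField

section VectorField

variable {H : ℝ³ → ℝ³}

lemma pderiv3_component_comm_of_curl3_eq_zero (hcurl : ∀ x, curl3 H x = 0) (i j : Fin 3) :
    pderiv3 i (fun y => H y j) = pderiv3 j (fun y => H y i) := by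
  funext y
  have h0 := congrFun (hcurl y) 0
  have h1 := congrFun (hcurl y) 1
  have h2 := congrFun (hcurl y) 2
  simp only [curl3, Fin.isValue, Matrix.cons_val_zero, Pi.zero_apply, sub_eq_zero,
    Matrix.cons_val_one, Matrix.cons_val] at h0 h1 h2
  fin_cases i <;> fin_cases j <;> simp_all

lemma laplacian3_component_eq_zero (hH : ContDiff ℝ 2 H) (hdiv : ∀ x, div3 H x = 0)
    (hcurl : ∀ x, curl3 H x = 0) (j : Fin 3) (x : ℝ³) :
    laplacian3 (fun y => H y j) x = 0 := by
  have hcomp : ∀ i, ContDiff ℝ 2 (fun y => H y i) := (contDiff_piLp 2).mp hH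
  calc laplacian3 (fun y => H y j) x
      = ∑ i, pderiv3 i (pderiv3 j (fun y => H y i)) x := by
        simp only [laplacian3, pderiv3_component_comm_of_curl3_eq_zero hcurl _ j]
    _ = ∑ i, pderiv3 j (pderiv3 i (fun y => H y i)) x :=
        sum_congr rfl fun i _ => pderiv3_comm i j (hcomp i) x
    _ = pderiv3 j (div3 H) x :=
        (pderiv3_sum j univ fun i _ => (hcomp i).differentiable_pderiv3 i x).symm
    _ = 0 := by simp [funext hdiv, pderiv3]

lemma laplacian3_norm_sq (hH : ContDiff ℝ 2 H) (x : ℝ³) :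
    laplacian3 (fun y => ‖H y‖ ^ 2) x
      = 2 * frobSqDeriv3 H x + 2 * ∑ j, H x j * laplacian3 (fun y => H y j) x := by
  have hcomp : ∀ j, ContDiff ℝ 2 (fun y => H y j) := (contDiff_piLp 2).mp hH
  have hnorm : (fun y => ‖H y‖ ^ 2) = fun y => ∑ j, H y j * H y j := by
    funext y
    rw [EuclideanSpace.real_norm_sq_eq]
    simp only [sq]
  rw [hnorm, laplacian3_sum univ fun j _ => (hcomp j).mul (hcomp j), frobSqDeriv3, sum_comm,
    mul_sum, mul_sum, ← sum_add_distrib]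
  refine sum_congr rfl fun j _ => ?_
  rw [laplacian3_mul (hcomp j) (hcomp j)]
  simp only [sq]
  ring

end VectorField

/-- **Earnshaw-type Laplacian identity.**  If `H` is a `C²` divergence-free and curl-free
vector field on `ℝ³` and `k > 0`, then the potential `U = -k‖H‖²` satisfies
`ΔU = -2k‖DH‖_F²` everywhere; in particular `ΔU ≤ 0`. -/
theorem stmt0 (H : EuclideanSpace ℝ (Fin 3) → EuclideanSpace ℝ (Fin 3))
    (hH : ContDiff ℝ 2 H) (k : ℝ) (hk : 0 < k)
    (hdiv : ∀ x, div3 H x = 0) (hcurl : ∀ x, curl3 H x = 0) :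
    ∀ x, laplacian3 (fun y => -k * ‖H y‖ ^ 2) x = -2 * k * frobSqDeriv3 H x ∧
      laplacian3 (fun y => -k * ‖H y‖ ^ 2) x ≤ 0 := by
  intro x
  have hΔ : laplacian3 (fun y => -k * ‖H y‖ ^ 2) x = -2 * k * frobSqDeriv3 H x := by
    have hnorm : ContDiff ℝ 2 fun y => ‖H y‖ ^ 2 := (contDiff_norm_sq ℝ).comp hH
    rw [laplacian3_const_mul (-k) hnorm, laplacian3_norm_sq hH]
    simp only [laplacian3_component_eq_zero hH hdiv hcurl, mul_zero, sum_const_zero, add_zero]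
    ring
  have hfrob : 0 ≤ frobSqDeriv3 H x := by
    unfold frobSqDeriv3
    positivity
  exact ⟨hΔ, hΔ ▸ mul_nonpos_of_nonpos_of_nonneg (by linarith) hfrob⟩
end

section
/- (Earnshaw-type obstruction) Let H : ℝ³ → ℝ³ be a twice continuously differentiable vector field with div H = 0 and curl H = 0 everywhere, let k > 0, and set U(x) = -k‖H(x)‖². Then at no point x₀ is the Hessian of U positive definite; consequently U has no non-degenerate local minimum. -/
/-- The Hessian of a scalar field `f` at `x`, as the bilinear form `(v, w) ↦ D²f(x)[v, w]`. -/
noncomputable def hessian3 (f : EuclideanSpace ℝ (Fin 3) → ℝ)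
    (x v w : EuclideanSpace ℝ (Fin 3)) : ℝ :=
  fderiv ℝ (fderiv ℝ f) x v w


/-! The trace of the Hessian of `‖H‖²` in an orthonormal basis is
`2 ‖DH‖²_F + 2 ⟪H, ΔH⟫`. A curl-free field has a symmetric Jacobian, so by Schwarz
`⟪ΔH, e_j⟫ = ∂_j (div H)`, which vanishes for a divergence-free field. Hence the trace of the
Hessian of `U = -k ‖H‖²` is `-2k ‖DH‖²_F ≤ 0`, whereas a positive definite Hessian has positive
trace. -/

open scoped RealInnerProductSpace

section
variable {E F : Type*} [NormedAddCommGroup E] [NormedSpace ℝ E]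
  [NormedAddCommGroup F] [InnerProductSpace ℝ F]

theorem fderiv_fderiv_const_mul (c : ℝ) (f : E → ℝ) (x v w : E) :
    fderiv ℝ (fderiv ℝ fun y => c * f y) x v w = c * fderiv ℝ (fderiv ℝ f) x v w := by
  have : (fun y => c * f y) = c • f := rfl
  rw [this, fderiv_const_smul_field, fderiv_const_smul_field (f := fderiv ℝ f)]
  rfl

theorem fderiv_fderiv_apply {f : E → F} {x : E} (hf : DifferentiableAt ℝ (fderiv ℝ f) x)
    (v w : E) : fderiv ℝ (fun y => fderiv ℝ f y w) x v = fderiv ℝ (fderiv ℝ f) x v w := by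
  rw [fderiv_clm_apply hf (differentiableAt_const w)]
  simp

theorem inner_fderiv_fderiv {f : E → F} {x : E} (hf : DifferentiableAt ℝ (fderiv ℝ f) x)
    (u v : E) (w : F) :
    ⟪fderiv ℝ (fderiv ℝ f) x u v, w⟫ = fderiv ℝ (fun y => ⟪fderiv ℝ f y v, w⟫) x u := by
  rw [fderiv_inner_apply ℝ (hf.clm_apply (differentiableAt_const v)) (differentiableAt_const w),
    fderiv_fderiv_apply hf]
  simp

theorem fderiv_fderiv_norm_sq {H : E → F} (hH : ContDiff ℝ 2 H) (x v w : E) :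
    fderiv ℝ (fderiv ℝ fun y => ‖H y‖ ^ 2) x v w =
      2 * (⟪fderiv ℝ H x v, fderiv ℝ H x w⟫ + ⟪H x, fderiv ℝ (fderiv ℝ H) x v w⟫) := by
  have hH1 : Differentiable ℝ H := hH.differentiable two_ne_zero
  have hH2 : Differentiable ℝ (fderiv ℝ H) :=
    (hH.fderiv_right (m := 1) le_rfl).differentiable one_ne_zero
  have hH2w : DifferentiableAt ℝ (fun y => fderiv ℝ H y w) x :=
    (hH2 x).clm_apply (differentiableAt_const w)
  have hgrad : ∀ y, fderiv ℝ (fun y => ‖H y‖ ^ 2) y w = 2 * ⟪H y, fderiv ℝ H y w⟫ := fun y => by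
    rw [(hH1 y).hasFDerivAt.norm_sq.fderiv]
    simp
  rw [← fderiv_fderiv_apply, funext hgrad, fderiv_const_mul ((hH1 x).inner ℝ hH2w),
    smul_apply, fderiv_inner_apply ℝ (hH1 x) hH2w, fderiv_fderiv_apply (hH2 x)]
  · rw [smul_eq_mul, add_comm]
  · exact ((hH.norm_sq ℝ).fderiv_right (m := 1) le_rfl).differentiable one_ne_zero x
end

section
variable {ι E : Type*} [Fintype ι] [NormedAddCommGroup E] [InnerProductSpace ℝ E]

theorem sum_fderiv_fderiv_basis_eq_zero (b : OrthonormalBasis ι ℝ E) {H : E → E}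
    (hH : ContDiff ℝ 2 H)
    (hsymm : ∀ y i j, ⟪fderiv ℝ H y (b i), b j⟫ = ⟪fderiv ℝ H y (b j), b i⟫)
    (htrace : ∀ y, ∑ i, ⟪fderiv ℝ H y (b i), b i⟫ = 0) (x : E) :
    ∑ i, fderiv ℝ (fderiv ℝ H) x (b i) (b i) = 0 := by
  have hH2 : Differentiable ℝ (fderiv ℝ H) :=
    (hH.fderiv_right (m := 1) le_rfl).differentiable one_ne_zero
  refine InnerProductSpace.ext_inner_right_basis b.toBasis fun j => ?_
  have hswap : ∀ i, ⟪fderiv ℝ (fderiv ℝ H) x (b i) (b i), b j⟫ =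
      fderiv ℝ (fun y => ⟪fderiv ℝ H y (b i), b i⟫) x (b j) := fun i => by
    calc ⟪fderiv ℝ (fderiv ℝ H) x (b i) (b i), b j⟫
        = fderiv ℝ (fun y => ⟪fderiv ℝ H y (b j), b i⟫) x (b i) := by
          rw [inner_fderiv_fderiv (hH2 x)]; simp_rw [hsymm _ i j]
      _ = ⟪fderiv ℝ (fderiv ℝ H) x (b i) (b j), b i⟫ := (inner_fderiv_fderiv (hH2 x) ..).symm
      _ = ⟪fderiv ℝ (fderiv ℝ H) x (b j) (b i), b i⟫ := by
          rw [hH.contDiffAt.isSymmSndFDerivAt (by simp)]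
      _ = fderiv ℝ (fun y => ⟪fderiv ℝ H y (b i), b i⟫) x (b j) := inner_fderiv_fderiv (hH2 x) ..
  rw [OrthonormalBasis.coe_toBasis, sum_inner, Finset.sum_congr rfl fun i _ => hswap i,
    ← sum_apply, ← fderiv_fun_sum, funext htrace]
  · simp
  · exact fun i _ =>
      ((hH2 x).clm_apply (differentiableAt_const _)).inner ℝ (differentiableAt_const _)

theorem sum_fderiv_fderiv_norm_sq_nonneg (b : OrthonormalBasis ι ℝ E) {H : E → E}
    (hH : ContDiff ℝ 2 H)
    (hsymm : ∀ y i j, ⟪fderiv ℝ H y (b i), b j⟫ = ⟪fderiv ℝ H y (b j), b i⟫)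
    (htrace : ∀ y, ∑ i, ⟪fderiv ℝ H y (b i), b i⟫ = 0) (x : E) :
    0 ≤ ∑ i, fderiv ℝ (fderiv ℝ fun y => ‖H y‖ ^ 2) x (b i) (b i) := by
  simp_rw [fderiv_fderiv_norm_sq hH, ← Finset.mul_sum, Finset.sum_add_distrib, ← inner_sum,
    sum_fderiv_fderiv_basis_eq_zero b hH hsymm htrace x, inner_zero_right, add_zero,
    real_inner_self_eq_norm_sq]
  positivity
end

local notation "E3" => EuclideanSpace ℝ (Fin 3)
local notation "𝐞" => EuclideanSpace.basisFun (Fin 3) ℝ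

theorem pderiv3_eq_inner {H : E3 → E3} {y : E3} (hH : DifferentiableAt ℝ H y) (i j : Fin 3) :
    pderiv3 i (fun y => H y j) y =
      ⟪fderiv ℝ H y (EuclideanSpace.single i 1), EuclideanSpace.single j 1⟫ := by
  have : (fun y => H y j) = fun y => ⟪H y, EuclideanSpace.single j 1⟫ := by
    simp [EuclideanSpace.inner_single_right]
  rw [pderiv3, this, fderiv_inner_apply ℝ hH (differentiableAt_const _)]
  simp

theorem div3_eq_sum_inner {H : E3 → E3} {y : E3} (hH : DifferentiableAt ℝ H y) :
    div3 H y = ∑ i, ⟪fderiv ℝ H y (𝐞 i), 𝐞 i⟫ := by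
  simp [div3, pderiv3_eq_inner hH]

theorem inner_fderiv_comm_of_curl3_eq_zero {H : E3 → E3} {y : E3} (hH : DifferentiableAt ℝ H y)
    (hcurl : curl3 H y = 0) (i j : Fin 3) :
    ⟪fderiv ℝ H y (𝐞 i), 𝐞 j⟫ = ⟪fderiv ℝ H y (𝐞 j), 𝐞 i⟫ := by
  have h := congrFun hcurl
  simp only [curl3, pderiv3_eq_inner hH] at h
  have h0 := h 0; have h1 := h 1; have h2 := h 2
  simp [sub_eq_zero] at h0 h1 h2
  fin_cases i <;> fin_cases j <;> simp_all

theorem sum_hessian3_neg_mul_norm_sq_nonpos {H : E3 → E3} (hH : ContDiff ℝ 2 H)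
    (hdiv : ∀ x, div3 H x = 0) (hcurl : ∀ x, curl3 H x = 0) {k : ℝ} (hk : 0 ≤ k) (x : E3) :
    ∑ i, hessian3 (fun y => -k * ‖H y‖ ^ 2) x (𝐞 i) (𝐞 i) ≤ 0 := by
  have hH1 : Differentiable ℝ H := hH.differentiable two_ne_zero
  have hlap := sum_fderiv_fderiv_norm_sq_nonneg 𝐞 hH
    (fun y => inner_fderiv_comm_of_curl3_eq_zero (hH1 y) (hcurl y))
    (fun y => (div3_eq_sum_inner (hH1 y)).symm.trans (hdiv y)) x
  simp only [hessian3, fderiv_fderiv_const_mul, ← Finset.mul_sum]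
  exact mul_nonpos_of_nonpos_of_nonneg (neg_nonpos.mpr hk) hlap

/-- **Earnshaw-type obstruction.**  If `H` is a `C²` divergence-free and curl-free vector
field on `ℝ³`, `k > 0`, and `U = -k‖H‖²`, then at no point is the Hessian of `U`
positive definite; consequently `U` has no non-degenerate local minimum. -/
theorem stmt1 (H : EuclideanSpace ℝ (Fin 3) → EuclideanSpace ℝ (Fin 3))
    (hH : ContDiff ℝ 2 H) (k : ℝ) (hk : 0 < k)
    (hdiv : ∀ x, div3 H x = 0) (hcurl : ∀ x, curl3 H x = 0)
    (U : EuclideanSpace ℝ (Fin 3) → ℝ) (hU : U = fun y => -k * ‖H y‖ ^ 2) :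
    (∀ x₀ : EuclideanSpace ℝ (Fin 3),
      ¬ (∀ v : EuclideanSpace ℝ (Fin 3), v ≠ 0 → 0 < hessian3 U x₀ v v)) ∧
    (∀ x₀ : EuclideanSpace ℝ (Fin 3),
      ¬ (fderiv ℝ U x₀ = 0 ∧
        ∀ v : EuclideanSpace ℝ (Fin 3), v ≠ 0 → 0 < hessian3 U x₀ v v)) := by
  have not_posDef : ∀ x₀, ¬ ∀ v : E3, v ≠ 0 → 0 < hessian3 U x₀ v v := by
    intro x₀ hpos
    have htrace_pos : 0 < ∑ i, hessian3 U x₀ (𝐞 i) (𝐞 i) :=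
      Finset.sum_pos (fun i _ => hpos _ ((𝐞).orthonormal.ne_zero i)) Finset.univ_nonempty
    subst hU
    exact htrace_pos.not_ge (sum_hessian3_neg_mul_norm_sq_nonpos hH hdiv hcurl hk.le x₀)
  exact ⟨not_posDef, fun x₀ h => not_posDef x₀ h.2⟩
end

section
/- (Damping separation and time rescaling) Let ε, α, ω, c_μ, c_δ be real with ε² + αc_μ > 0, set ε̄ = √(ε² + αc_μ), ω̄ = ω/ε̄ and δ̄ = αc_δ/ε̄². Let S = [[0,-1],[1,0]], I₂ the 2×2 identity, D(a,b) = diag(a-b, a+b). If z : ℝ → ℝ² is twice differentiable and satisfies z̈ + (2ωS + 2εI₂)ż + (2ωεS - ω²I₂)z - αD(c_μ,c_δ)z = 0 for all t, then the function q defined by q(s) = e^{(ε/ε̄)s} z(s/ε̄) is twice differentiable and satisfies q''(s) + 2ω̄ S q'(s) - ω̄² q(s) - D(1, δ̄) q(s) = 0 for all s. -/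
/-!
Differentiating `s ↦ e^{cs} • z(s/a)` gives a function of the same shape, with `z` replaced by
`a⁻¹ • ż + c • z`. Applying this twice with `a = ε̄`, `c = ε/ε̄` shows that the residual of the
`q`-equation at `s` is `e^{cs}/ε̄²` times the residual of the `z`-equation at `s/ε̄`; the only
identity needed is `ε̄² D(1, δ̄) = D(ε̄², αc_δ) = ε² I + α D(c_μ, c_δ)`.
-/

open Matrix

/-- The rotation generator `S = [[0,-1],[1,0]]`. -/
def Smat : Matrix (Fin 2) (Fin 2) ℝ := !![0, -1; 1, 0]

/-- The saddle curvature matrix `D(a, b) = diag(a - b, a + b)`. -/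
def Dmat (a b : ℝ) : Matrix (Fin 2) (Fin 2) ℝ := !![a - b, 0; 0, a + b]

section ExpRescaling

variable {E : Type*} [NormedAddCommGroup E] [NormedSpace ℝ E] {z : ℝ → E} (c a : ℝ)

theorem hasDerivAt_exp_mul_smul_comp_div {z' : E} {s : ℝ} (hz : HasDerivAt z z' (s / a)) :
    HasDerivAt (fun s => Real.exp (c * s) • z (s / a))
      (Real.exp (c * s) • (a⁻¹ • z' + c • z (s / a))) s := by
  have hexp : HasDerivAt (fun s => Real.exp (c * s)) (Real.exp (c * s) * c) s := by
    simpa using ((hasDerivAt_id s).const_mul c).exp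
  have hzs : HasDerivAt (fun s => z (s / a)) (a⁻¹ • z') s := by
    simpa [Function.comp_def] using hz.scomp s ((hasDerivAt_id s).div_const a)
  refine (hexp.smul hzs).congr_deriv ?_
  rw [smul_add, mul_smul, add_comm]

theorem Differentiable.exp_mul_smul_comp_div (hz : Differentiable ℝ z) :
    Differentiable ℝ (fun s => Real.exp (c * s) • z (s / a)) := fun _ =>
  (hasDerivAt_exp_mul_smul_comp_div c a (hz _).hasDerivAt).differentiableAt

theorem deriv_exp_mul_smul_comp_div (hz : Differentiable ℝ z) :
    deriv (fun s => Real.exp (c * s) • z (s / a)) =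
      fun s => Real.exp (c * s) • (a⁻¹ • deriv z (s / a) + c • z (s / a)) :=
  funext fun _ => (hasDerivAt_exp_mul_smul_comp_div c a (hz _).hasDerivAt).deriv

end ExpRescaling

theorem rescaled_residual_eq_smul (ε α ω cμ cδ a e : ℝ) (ha : a ≠ 0) (ha2 : a ^ 2 = ε ^ 2 + α * cμ)
    (z₀ z₁ z₂ : Fin 2 → ℝ) :
    e • (a⁻¹ • (a⁻¹ • z₂ + (ε / a) • z₁) + (ε / a) • (a⁻¹ • z₁ + (ε / a) • z₀))
      + (2 * (ω / a)) • Smat *ᵥ (e • (a⁻¹ • z₁ + (ε / a) • z₀))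
      - (ω / a) ^ 2 • (e • z₀) - Dmat 1 (α * cδ / a ^ 2) *ᵥ (e • z₀)
    = (e / a ^ 2) • (z₂ + ((2 * ω) • Smat + (2 * ε) • (1 : Matrix (Fin 2) (Fin 2) ℝ)) *ᵥ z₁
        + ((2 * ω * ε) • Smat - ω ^ 2 • (1 : Matrix (Fin 2) (Fin 2) ℝ)) *ᵥ z₀
        - α • Dmat cμ cδ *ᵥ z₀) := by
  ext i
  fin_cases i <;>
  · simp [Smat, Dmat, dotProduct, Fin.sum_univ_two, vecHead, vecTail]
    field_simp
    linear_combination (-(e * z₀ _)) * ha2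

/-- **Damping separation and time rescaling.**  If `z` solves the rotating-frame equation
`z̈ + (2ωS + 2εI)ż + (2ωεS - ω²I)z - αD(c_μ,c_δ)z = 0` and `ε² + αc_μ > 0`, then
`q(s) = e^{(ε/ε̄)s} z(s/ε̄)` (with `ε̄ = √(ε² + αc_μ)`) is twice differentiable and solves
`q'' + 2ω̄Sq' - ω̄²q - D(1,δ̄)q = 0`, where `ω̄ = ω/ε̄` and `δ̄ = αc_δ/ε̄²`. -/
theorem stmt3 (ε α ω cμ cδ : ℝ) (hpos : 0 < ε ^ 2 + α * cμ)
    (εb : ℝ) (hεb : εb = Real.sqrt (ε ^ 2 + α * cμ))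
    (ωb : ℝ) (hωb : ωb = ω / εb)
    (δb : ℝ) (hδb : δb = α * cδ / εb ^ 2)
    (z : ℝ → Fin 2 → ℝ)
    (hz : Differentiable ℝ z) (hz' : Differentiable ℝ (deriv z))
    (hode : ∀ t, deriv (deriv z) t
        + ((2 * ω) • Smat + (2 * ε) • (1 : Matrix (Fin 2) (Fin 2) ℝ)).mulVec (deriv z t)
        + ((2 * ω * ε) • Smat - (ω ^ 2) • (1 : Matrix (Fin 2) (Fin 2) ℝ)).mulVec (z t)
        - α • (Dmat cμ cδ).mulVec (z t) = 0)
    (q : ℝ → Fin 2 → ℝ) (hq : q = fun s => Real.exp ((ε / εb) * s) • z (s / εb)) :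
    Differentiable ℝ q ∧ Differentiable ℝ (deriv q) ∧
      ∀ s, deriv (deriv q) s + (2 * ωb) • Smat.mulVec (deriv q s)
        - (ωb ^ 2) • q s - (Dmat 1 δb).mulVec (q s) = 0 := by
  have hεb0 : εb ≠ 0 := by rw [hεb]; exact (Real.sqrt_pos.mpr hpos).ne'
  have hεb2 : εb ^ 2 = ε ^ 2 + α * cμ := by rw [hεb, Real.sq_sqrt hpos.le]
  set w : ℝ → Fin 2 → ℝ := fun t => εb⁻¹ • deriv z t + (ε / εb) • z t
  have hw : Differentiable ℝ w := by fun_prop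
  have hw' : ∀ t, deriv w t = εb⁻¹ • deriv (deriv z) t + (ε / εb) • deriv z t := fun t =>
    (((hz' t).hasDerivAt.fun_const_smul _).fun_add ((hz t).hasDerivAt.fun_const_smul _)).deriv
  have hq' : deriv q = fun s => Real.exp ((ε / εb) * s) • w (s / εb) := by
    rw [hq]; exact deriv_exp_mul_smul_comp_div _ _ hz
  have hq'' : deriv (deriv q) = fun s =>
      Real.exp ((ε / εb) * s) • (εb⁻¹ • deriv w (s / εb) + (ε / εb) • w (s / εb)) := by
    rw [hq']; exact deriv_exp_mul_smul_comp_div _ _ hw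
  refine ⟨hq ▸ hz.exp_mul_smul_comp_div _ _, hq' ▸ hw.exp_mul_smul_comp_div _ _, fun s => ?_⟩
  rw [hq'', hq', hq, hωb, hδb]
  simp only [hw', w]
  rw [rescaled_residual_eq_smul ε α ω cμ cδ εb _ hεb0 hεb2, hode, smul_zero]
end

section
/- (Stability condition, frequency-window form) Let ω̄ > 0, δ̄ > 0 and 0 < c < 1, and let P(λ) = λ⁴ + 2λ²(ω̄² - 1) + (ω̄² + 1)² - δ̄² over ℂ. Then every root λ ∈ ℂ of P satisfies Re(λ) < c if and only if ω̄ > √(1 - c²) and 2√(1 - c²)·√(ω̄² + c²) < δ̄ < √(4ω̄² + (ω̄² - 1 + c²)²). -/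
/-!
Roots of `P` come in pairs `±μ`, so they all satisfy `Re μ < c` iff they all satisfy
`|Re μ| < c`, and `μ ↦ μ²` maps the strip `|Re μ| < c` onto the inside of the parabola
`y² < 4c²(c² - x)`. As a quadratic in `μ²`, `P` has roots `1 - ω̄² ± s` with `s² = δ̄² - 4ω̄²`
real, so `s` is real or purely imaginary; in both cases the two roots lie inside the parabola
iff, with `K = c² + ω̄² - 1`, we have `K > 0`, `δ̄² - 4ω̄² < K²` and `4ω̄² - δ̄² < 4c²K`.
Squaring the three inequalities of the frequency window gives exactly these.
-/

open Complex

theorem re_sq_lt_sq_iff (μ : ℂ) (c : ℝ) :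
    μ.re ^ 2 < c ^ 2 ↔ (μ ^ 2).im ^ 2 < 4 * c ^ 2 * (c ^ 2 - (μ ^ 2).re) := by
  have key : 4 * c ^ 2 * (c ^ 2 - (μ ^ 2).re) - (μ ^ 2).im ^ 2
      = 4 * (c ^ 2 - μ.re ^ 2) * (c ^ 2 + μ.im ^ 2) := by
    simp only [sq, mul_re, mul_im]; ring
  constructor
  · intro h
    nlinarith [sq_nonneg μ.im, sq_nonneg c]
  · intro h
    nlinarith [sq_nonneg μ.im, sq_nonneg c, sq_nonneg μ.re]

theorem forall_sq_eq_re_lt_iff {c : ℝ} (hc : 0 ≤ c) (v : ℂ) :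
    (∀ μ : ℂ, μ ^ 2 = v → μ.re < c) ↔ v.im ^ 2 < 4 * c ^ 2 * (c ^ 2 - v.re) := by
  obtain ⟨μ₀, rfl⟩ := IsAlgClosed.exists_pow_nat_eq v two_pos
  rw [← re_sq_lt_sq_iff, sq_lt_sq, abs_of_nonneg hc, abs_lt]
  constructor
  · intro h
    have := h (-μ₀) (neg_sq μ₀)
    rw [neg_re] at this
    exact ⟨by linarith, h μ₀ rfl⟩
  · rintro ⟨hneg, hpos⟩ μ hμ
    rcases sq_eq_sq_iff_eq_or_eq_neg.mp hμ with rfl | rfl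
    · exact hpos
    · rw [neg_re]; linarith

theorem quartic_eq_zero_iff {R : Type*} [CommRing R] [NoZeroDivisors R] {w d s : R}
    (hs : s ^ 2 = d ^ 2 - 4 * w) (μ : R) :
    μ ^ 4 + 2 * μ ^ 2 * (w - 1) + (w + 1) ^ 2 - d ^ 2 = 0 ↔
      μ ^ 2 = 1 - w + s ∨ μ ^ 2 = 1 - w - s := by
  have factor : μ ^ 4 + 2 * μ ^ 2 * (w - 1) + (w + 1) ^ 2 - d ^ 2
      = (μ ^ 2 - (1 - w + s)) * (μ ^ 2 - (1 - w - s)) := by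
    linear_combination hs
  rw [factor, mul_eq_zero, sub_eq_zero, sub_eq_zero]

theorem parabola_pair_iff_of_sq_eq_ofReal {c : ℝ} (hc : c ≠ 0) {K D : ℝ} {s : ℂ}
    (hs : s ^ 2 = D) :
    (s.im ^ 2 < 4 * c ^ 2 * (K - s.re) ∧ s.im ^ 2 < 4 * c ^ 2 * (K + s.re)) ↔
      0 < K ∧ D < K ^ 2 ∧ -D < 4 * c ^ 2 * K := by
  have hre : s.re ^ 2 - s.im ^ 2 = D := by
    simpa [sq] using congrArg re hs
  have him : s.re * s.im = 0 := by
    have := congrArg im hs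
    simp only [sq, mul_im, ofReal_im] at this
    linarith
  have hc2 : 0 < c ^ 2 := by positivity
  rcases mul_eq_zero.mp him with h0 | h0
  · simp only [h0, zero_pow two_ne_zero, zero_sub, sub_zero, add_zero] at hre ⊢
    rw [← hre, neg_neg, and_self]
    refine ⟨fun h => ?_, fun h => h.2.2⟩
    have hK : 0 < K := by nlinarith [sq_nonneg s.im]
    exact ⟨hK, by nlinarith [sq_nonneg s.im, sq_pos_of_pos hK], h⟩
  · simp only [h0, zero_pow two_ne_zero, sub_zero] at hre ⊢
    have h4c2 : 0 < 4 * c ^ 2 := by positivity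
    rw [mul_pos_iff_of_pos_left h4c2, mul_pos_iff_of_pos_left h4c2, ← hre, sub_pos, ← neg_lt_iff_pos_add]
    constructor
    · rintro ⟨h₁, h₂⟩
      have hK : 0 < K := by linarith
      exact ⟨hK, sq_lt_sq' (by linarith) h₁, by nlinarith [sq_nonneg s.re]⟩
    · rintro ⟨hK, hsq, -⟩
      have := abs_lt.mp (abs_lt_of_sq_lt_sq hsq hK.le)
      constructor <;> linarith

theorem forall_quartic_root_re_lt_iff {c : ℝ} (hc : 0 < c) (w d : ℝ) :
    (∀ μ : ℂ, μ ^ 4 + 2 * μ ^ 2 * ((w : ℂ) - 1) + ((w : ℂ) + 1) ^ 2 - (d : ℂ) ^ 2 = 0 →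
        μ.re < c) ↔
      0 < c ^ 2 + w - 1 ∧ d ^ 2 - 4 * w < (c ^ 2 + w - 1) ^ 2 ∧
        -(d ^ 2 - 4 * w) < 4 * c ^ 2 * (c ^ 2 + w - 1) := by
  obtain ⟨s, hs⟩ := IsAlgClosed.exists_pow_nat_eq ((d ^ 2 - 4 * w : ℝ) : ℂ) two_pos
  have hs' : s ^ 2 = (d : ℂ) ^ 2 - 4 * (w : ℂ) := by rw [hs]; push_cast; ring
  simp_rw [quartic_eq_zero_iff hs', or_imp, forall_and]
  rw [← parabola_pair_iff_of_sq_eq_ofReal hc.ne' hs, forall_sq_eq_re_lt_iff hc.le,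
    forall_sq_eq_re_lt_iff hc.le]
  simp only [add_re, sub_re, add_im, sub_im, one_re, one_im, ofReal_re, ofReal_im]
  ring_nf

theorem frequency_window_iff {ω δ c : ℝ} (hω : 0 < ω) (hδ : 0 ≤ δ) (hc : c ^ 2 ≤ 1) :
    (ω > √(1 - c ^ 2) ∧ 2 * √(1 - c ^ 2) * √(ω ^ 2 + c ^ 2) < δ ∧
        δ < √(4 * ω ^ 2 + (ω ^ 2 - 1 + c ^ 2) ^ 2)) ↔
      0 < c ^ 2 + ω ^ 2 - 1 ∧ δ ^ 2 - 4 * ω ^ 2 < (c ^ 2 + ω ^ 2 - 1) ^ 2 ∧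
        -(δ ^ 2 - 4 * ω ^ 2) < 4 * c ^ 2 * (c ^ 2 + ω ^ 2 - 1) := by
  have hc' : 0 ≤ 1 - c ^ 2 := by linarith
  rw [gt_iff_lt, Real.sqrt_lt' hω, ← sq_lt_sq₀ (by positivity) hδ, mul_pow, mul_pow,
    Real.sq_sqrt hc', Real.sq_sqrt (by positivity), Real.lt_sqrt hδ]
  constructor <;> rintro ⟨h₁, h₂, h₃⟩ <;> refine ⟨by linarith, by linarith, by linarith⟩

/-- **Stability condition, frequency-window form.**  For `ω̄, δ̄ > 0` and `0 < c < 1`,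
every complex root of `P(λ) = λ⁴ + 2λ²(ω̄² - 1) + (ω̄² + 1)² - δ̄²` has real part `< c`
iff `ω̄ > √(1 - c²)` and `2√(1-c²)√(ω̄²+c²) < δ̄ < √(4ω̄² + (ω̄² - 1 + c²)²)`. -/
theorem stmt9 (ωb δb c : ℝ) (hωb : 0 < ωb) (hδb : 0 < δb) (hc0 : 0 < c) (hc1 : c < 1) :
    (∀ μ : ℂ,
        μ ^ 4 + 2 * μ ^ 2 * ((ωb : ℂ) ^ 2 - 1) + ((ωb : ℂ) ^ 2 + 1) ^ 2 - (δb : ℂ) ^ 2 = 0 →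
        μ.re < c) ↔
    (ωb > Real.sqrt (1 - c ^ 2) ∧
      2 * Real.sqrt (1 - c ^ 2) * Real.sqrt (ωb ^ 2 + c ^ 2) < δb ∧
      δb < Real.sqrt (4 * ωb ^ 2 + (ωb ^ 2 - 1 + c ^ 2) ^ 2)) := by
  have hroots := forall_quartic_root_re_lt_iff hc0 (ωb ^ 2) δb
  push_cast at hroots
  rw [hroots, frequency_window_iff hωb hδb.le (by nlinarith)]
end

section
/- (Steep-saddle case) Let ω̄ > 0, δ̄ > 0 with δ̄ > 2ω̄, let 0 < c < 1, and let P(λ) = λ⁴ + 2λ²(ω̄² - 1) + (ω̄² + 1)² - δ̄² over ℂ. Then the maximum of Re(λ) over the roots λ of P equals √(1 - ω̄² + √(δ̄² - 4ω̄²)) (real square root when the argument is nonnegative), and all roots satisfy Re(λ) < c if and only if ω̄ > √(1 - c²) and δ̄ < √(4ω̄² + (ω̄² - 1 + c²)²). -/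
lemma re_le_sqrt_of_sq_eq (t : ℝ) (μ : ℂ) (h : μ ^ 2 = (t : ℂ)) :
    μ.re ≤ Real.sqrt t := by
  have him : μ.re * μ.im + μ.im * μ.re = 0 := by
    have := congrArg Complex.im h
    simpa [pow_two, Complex.mul_im] using this
  have hmul : μ.re * μ.im = 0 := by linarith
  rcases mul_eq_zero.mp hmul with h0 | h0
  · rw [h0]; exact Real.sqrt_nonneg t
  · have hre : μ.re ^ 2 = t := by
      have := congrArg Complex.re h
      simp [pow_two, Complex.mul_re, h0] at this ⊢
      linarith
    calc μ.re ≤ |μ.re| := le_abs_self _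
    _ = Real.sqrt (μ.re ^ 2) := (Real.sqrt_sq_eq_abs _).symm
    _ = Real.sqrt t := by rw [hre]

lemma exists_root_re_sqrt (t : ℝ) : ∃ μ : ℂ, μ ^ 2 = (t : ℂ) ∧ μ.re = Real.sqrt t := by
  by_cases ht : 0 ≤ t
  · exact ⟨(Real.sqrt t : ℂ), by exact_mod_cast Real.sq_sqrt ht, by simp⟩
  · refine ⟨(Real.sqrt (-t) : ℂ) * Complex.I, ?_, ?_⟩
    · have : (Real.sqrt (-t)) ^ 2 = -t := Real.sq_sqrt (by linarith)
      have h2 : ((Real.sqrt (-t) : ℝ) : ℂ) ^ 2 = ((-t : ℝ) : ℂ) := by exact_mod_cast this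
      rw [mul_pow, h2, Complex.I_sq]; push_cast; ring
    · have : Real.sqrt t = 0 := Real.sqrt_eq_zero_of_nonpos (le_of_lt (not_le.mp ht))
      simp [this]

/-- **Steep-saddle case.**  For `ω̄, δ̄ > 0` with `δ̄ > 2ω̄` and `0 < c < 1`, the maximum
real part over the complex roots of `P(λ) = λ⁴ + 2λ²(ω̄² - 1) + (ω̄² + 1)² - δ̄²` equals
`√(1 - ω̄² + √(δ̄² - 4ω̄²))`, and all roots have real part `< c` iff `ω̄ > √(1 - c²)` and
`δ̄ < √(4ω̄² + (ω̄² - 1 + c²)²)`. -/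
theorem stmt11 (ωb δb c : ℝ) (hωb : 0 < ωb) (hδb : 0 < δb) (hsteep : 2 * ωb < δb)
    (hc0 : 0 < c) (hc1 : c < 1) :
    IsGreatest {r : ℝ | ∃ μ : ℂ,
        μ ^ 4 + 2 * μ ^ 2 * ((ωb : ℂ) ^ 2 - 1) + ((ωb : ℂ) ^ 2 + 1) ^ 2 - (δb : ℂ) ^ 2 = 0 ∧
        μ.re = r}
      (Real.sqrt (1 - ωb ^ 2 + Real.sqrt (δb ^ 2 - 4 * ωb ^ 2))) ∧
    ((∀ μ : ℂ,
        μ ^ 4 + 2 * μ ^ 2 * ((ωb : ℂ) ^ 2 - 1) + ((ωb : ℂ) ^ 2 + 1) ^ 2 - (δb : ℂ) ^ 2 = 0 →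
        μ.re < c) ↔
      (ωb > Real.sqrt (1 - c ^ 2) ∧
        δb < Real.sqrt (4 * ωb ^ 2 + (ωb ^ 2 - 1 + c ^ 2) ^ 2))) := by
  set s := Real.sqrt (δb ^ 2 - 4 * ωb ^ 2) with hsdef
  have hd4 : 4 * ωb ^ 2 < δb ^ 2 := by nlinarith
  have hs2 : s ^ 2 = δb ^ 2 - 4 * ωb ^ 2 := Real.sq_sqrt (by linarith)
  have hspos : 0 < s := Real.sqrt_pos.mpr (by linarith)
  set A := 1 - ωb ^ 2 + s with hAdef
  set B := 1 - ωb ^ 2 - s with hBdef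
  have hs2' : ((s : ℂ)) ^ 2 = (δb : ℂ) ^ 2 - 4 * (ωb : ℂ) ^ 2 := by exact_mod_cast hs2
  -- factorization
  have hfac : ∀ μ : ℂ,
      μ ^ 4 + 2 * μ ^ 2 * ((ωb : ℂ) ^ 2 - 1) + ((ωb : ℂ) ^ 2 + 1) ^ 2 - (δb : ℂ) ^ 2 =
        (μ ^ 2 - (A : ℂ)) * (μ ^ 2 - (B : ℂ)) := by
    intro μ
    rw [hAdef, hBdef]
    push_cast
    linear_combination hs2'
  have hroot : ∀ μ : ℂ,
      (μ ^ 4 + 2 * μ ^ 2 * ((ωb : ℂ) ^ 2 - 1) + ((ωb : ℂ) ^ 2 + 1) ^ 2 - (δb : ℂ) ^ 2 = 0)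
        ↔ (μ ^ 2 = (A : ℂ) ∨ μ ^ 2 = (B : ℂ)) := by
    intro μ
    rw [hfac μ, mul_eq_zero, sub_eq_zero, sub_eq_zero]
  have hBA : B ≤ A := by rw [hAdef, hBdef]; linarith
  obtain ⟨μ₀, hμ₀sq, hμ₀re⟩ := exists_root_re_sqrt A
  have hgreat : IsGreatest {r : ℝ | ∃ μ : ℂ,
        μ ^ 4 + 2 * μ ^ 2 * ((ωb : ℂ) ^ 2 - 1) + ((ωb : ℂ) ^ 2 + 1) ^ 2 - (δb : ℂ) ^ 2 = 0 ∧
        μ.re = r} (Real.sqrt A) := by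
    constructor
    · exact ⟨μ₀, (hroot μ₀).mpr (Or.inl hμ₀sq), hμ₀re⟩
    · rintro r ⟨μ, hμ, rfl⟩
      rcases (hroot μ).mp hμ with h | h
      · exact re_le_sqrt_of_sq_eq A μ h
      · exact (re_le_sqrt_of_sq_eq B μ h).trans (Real.sqrt_le_sqrt hBA)
  refine ⟨hgreat, ?_⟩
  -- second part
  have key : Real.sqrt A < c ↔
      (ωb > Real.sqrt (1 - c ^ 2) ∧ δb < Real.sqrt (4 * ωb ^ 2 + (ωb ^ 2 - 1 + c ^ 2) ^ 2)) := by
    rw [Real.sqrt_lt' hc0]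
    constructor
    · intro h
      have hst : s < ωb ^ 2 - 1 + c ^ 2 := by rw [hAdef] at h; linarith
      have ht : 0 < ωb ^ 2 - 1 + c ^ 2 := lt_trans hspos hst
      constructor
      · show Real.sqrt (1 - c ^ 2) < ωb
        rw [Real.sqrt_lt' hωb]; linarith
      · rw [Real.lt_sqrt hδb.le]; nlinarith
    · rintro ⟨h1, h2⟩
      rw [gt_iff_lt, Real.sqrt_lt' hωb] at h1
      rw [Real.lt_sqrt hδb.le] at h2
      have ht : 0 < ωb ^ 2 - 1 + c ^ 2 := by linarith
      have : s < ωb ^ 2 - 1 + c ^ 2 := by nlinarith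
      rw [hAdef]; linarith
  rw [← key]
  constructor
  · intro hall
    have := hall μ₀ ((hroot μ₀).mpr (Or.inl hμ₀sq))
    rwa [hμ₀re] at this
  · intro h μ hμ
    exact lt_of_le_of_lt (hgreat.2 ⟨μ, hμ, rfl⟩) h
end

section
/- (Shallow-saddle case) Let ω̄ > 0, δ̄ > 0 with δ̄ ≤ 2ω̄, let 0 < c < 1, and let P(λ) = λ⁴ + 2λ²(ω̄² - 1) + (ω̄² + 1)² - δ̄² over ℂ. Then every root λ ∈ ℂ of P satisfies Re(λ) < c if and only if ω̄ > √(1 - c²) and δ̄ > 2√(1 - c²)·√(ω̄² + c²). -/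
private lemma stmt12_aux1 {u cc d : ℝ} (hcc : 0 < cc) (h1 : 4*(1-cc)*(u+cc) < d)
    (h2 : d ≤ 4*u) : 1 - cc < u := by nlinarith

private lemma stmt12_aux2 {s1 s2 d : ℝ} (h1 : 0 ≤ s1) (h2 : 0 ≤ s2) (hd : 0 < d)
    (h : 4*s1^2*s2^2 < d^2) : 2*s1*s2 < d := by nlinarith [mul_nonneg h1 h2]

private lemma stmt12_aux3 {s1 s2 d : ℝ} (h1 : 0 ≤ s1) (h2 : 0 ≤ s2)
    (h : 2*s1*s2 < d) : 4*s1^2*s2^2 < d^2 := by nlinarith [mul_nonneg h1 h2]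

/-- **Shallow-saddle case.**  For `ω̄, δ̄ > 0` with `δ̄ ≤ 2ω̄` and `0 < c < 1`, every
complex root of `P(λ) = λ⁴ + 2λ²(ω̄² - 1) + (ω̄² + 1)² - δ̄²` has real part `< c` iff
`ω̄ > √(1 - c²)` and `δ̄ > 2√(1 - c²)√(ω̄² + c²)`. -/
theorem stmt12 (ωb δb c : ℝ) (hωb : 0 < ωb) (hδb : 0 < δb) (hshallow : δb ≤ 2 * ωb)
    (hc0 : 0 < c) (hc1 : c < 1) :
    (∀ μ : ℂ,
        μ ^ 4 + 2 * μ ^ 2 * ((ωb : ℂ) ^ 2 - 1) + ((ωb : ℂ) ^ 2 + 1) ^ 2 - (δb : ℂ) ^ 2 = 0 →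
        μ.re < c) ↔
    (ωb > Real.sqrt (1 - c ^ 2) ∧
      δb > 2 * Real.sqrt (1 - c ^ 2) * Real.sqrt (ωb ^ 2 + c ^ 2)) := by
  have hc2 : (0:ℝ) ≤ 1 - c^2 := by nlinarith
  have hδ4 : δb^2 ≤ 4*ωb^2 := by nlinarith
  set a : ℝ := 1 - ωb^2 with ha
  set b : ℝ := Real.sqrt (4*ωb^2 - δb^2) with hbdef
  have hb0 : 0 ≤ b := Real.sqrt_nonneg _
  have hb2 : b^2 = 4*ωb^2 - δb^2 := Real.sq_sqrt (by linarith)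
  have hb2c : ((b:ℝ):ℂ)^2 = 4*(ωb:ℂ)^2 - (δb:ℂ)^2 := by exact_mod_cast hb2
  have key : ∀ μ:ℂ, μ^4 + 2*μ^2*((ωb:ℂ)^2 - 1) + ((ωb:ℂ)^2+1)^2 - (δb:ℂ)^2
      = (μ^2 - ((a:ℝ):ℂ))^2 + ((b:ℝ):ℂ)^2 := by
    intro μ
    rw [ha]
    push_cast
    linear_combination -hb2c
  set r : ℝ := Real.sqrt ((1+ωb^2)^2 - δb^2) with hrdef
  have hq0 : (0:ℝ) ≤ (1+ωb^2)^2 - δb^2 := by nlinarith [sq_nonneg (1 - ωb^2)]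
  have hr0 : 0 ≤ r := Real.sqrt_nonneg _
  have hr2 : r^2 = (1+ωb^2)^2 - δb^2 := Real.sq_sqrt hq0
  have hra : a^2 + b^2 = r^2 := by rw [hr2, hb2, ha]; ring
  have hs1 : (0:ℝ) ≤ Real.sqrt (1 - c^2) := Real.sqrt_nonneg _
  have hs2 : (0:ℝ) ≤ Real.sqrt (ωb^2 + c^2) := Real.sqrt_nonneg _
  have hs12 : Real.sqrt (1 - c^2)^2 = 1 - c^2 := Real.sq_sqrt hc2
  have hs22 : Real.sqrt (ωb^2 + c^2)^2 = ωb^2 + c^2 := Real.sq_sqrt (by positivity)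
  constructor
  · intro h
    -- construct the root with maximal real part
    have haler : a ≤ r := by nlinarith [sq_nonneg b]
    have harge : -r ≤ a := by nlinarith [sq_nonneg b]
    set x : ℝ := Real.sqrt ((a+r)/2) with hxdef
    set y : ℝ := Real.sqrt ((r-a)/2) with hydef
    have hx0 : 0 ≤ x := Real.sqrt_nonneg _
    have hy0 : 0 ≤ y := Real.sqrt_nonneg _
    have hx2 : x^2 = (a+r)/2 := Real.sq_sqrt (by linarith)
    have hy2 : y^2 = (r-a)/2 := Real.sq_sqrt (by linarith)
    have hxy : 2*x*y = b := by
      have h1 : x*y = Real.sqrt (((a+r)/2) * ((r-a)/2)) :=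
        (Real.sqrt_mul (by linarith) _).symm
      have h2 : ((a+r)/2) * ((r-a)/2) = (b/2)^2 := by linear_combination (-1/4 : ℝ)*hra
      rw [mul_assoc, h1, h2, Real.sqrt_sq (by linarith)]
      ring
    have hxyr : x^2 - y^2 = a := by rw [hx2, hy2]; ring
    have h1c : ((x:ℝ):ℂ)^2 - ((y:ℝ):ℂ)^2 = ((a:ℝ):ℂ) := by exact_mod_cast hxyr
    have h2c : 2*((x:ℝ):ℂ)*((y:ℝ):ℂ) = ((b:ℝ):ℂ) := by exact_mod_cast hxy
    have hsq : (((x:ℝ):ℂ) + ((y:ℝ):ℂ)*Complex.I)^2 = ((a:ℝ):ℂ) + ((b:ℝ):ℂ)*Complex.I := by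
      linear_combination h1c + Complex.I*h2c + ((y:ℝ):ℂ)^2*Complex.I_sq
    have hroot := h (((x:ℝ):ℂ) + ((y:ℝ):ℂ)*Complex.I) (by
      rw [key, hsq]
      linear_combination ((b:ℝ):ℂ)^2*Complex.I_sq)
    have hxc : x < c := by simpa using hroot
    have hxcc : (a+r)/2 < c^2 := by
      rw [← hx2]; exact pow_lt_pow_left₀ hxc hx0 two_ne_zero
    have hrlt : r < ωb^2 + 2*c^2 - 1 := by rw [ha] at hxcc; linarith
    have hsq' : r^2 < (ωb^2+2*c^2-1)^2 := pow_lt_pow_left₀ hrlt hr0 two_ne_zero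
    have hid : (1+ωb^2)^2 - (ωb^2+2*c^2-1)^2 = 4*(1-c^2)*(ωb^2+c^2) := by ring
    have hδbig : 4*(1-c^2)*(ωb^2+c^2) < δb^2 := by linarith [hr2, hsq', hid]
    have hω2 : 1 - c^2 < ωb^2 := stmt12_aux1 (pow_pos hc0 2) hδbig hδ4
    constructor
    · exact (Real.sqrt_lt' hωb).mpr hω2
    · exact stmt12_aux2 hs1 hs2 hδb (by rw [hs12, hs22]; linarith [hδbig])
  · rintro ⟨hω, hδ⟩ μ hμ
    have hω2 : 1 - c^2 < ωb^2 := (Real.sqrt_lt' hωb).mp hω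
    have hδ2 : 4*(1-c^2)*(ωb^2+c^2) < δb^2 := by
      have h' := stmt12_aux3 hs1 hs2 hδ
      rw [hs12, hs22] at h'; linarith
    have main : ∀ X Y : ℝ, X^2 - Y^2 = a → (2*X*Y)^2 = b^2 → X < c := by
      intro X Y hre him
      have h5 : (X^2+Y^2)^2 = r^2 := by linear_combination hra + (X^2 - Y^2 + a)*hre + him
      have h6 : X^2 + Y^2 = r := by
        have h7 : X^2+Y^2 = Real.sqrt (r^2) := by
          rw [← h5, Real.sqrt_sq (by positivity)]
        rwa [Real.sqrt_sq hr0] at h7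
      have hpos : 0 < ωb^2 + 2*c^2 - 1 := by linarith [pow_pos hc0 2]
      have hid : (1+ωb^2)^2 - (ωb^2+2*c^2-1)^2 = 4*(1-c^2)*(ωb^2+c^2) := by ring
      have hr2lt : r^2 < (ωb^2 + 2*c^2 - 1)^2 := by linarith [hr2, hδ2, hid]
      have hrlt : r < ωb^2 + 2*c^2 - 1 :=
        lt_of_pow_lt_pow_left₀ 2 hpos.le hr2lt
      have hX2 : X^2 < c^2 := by rw [ha] at hre; linarith
      exact lt_of_pow_lt_pow_left₀ 2 hc0.le hX2
    rw [key] at hμ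
    have hf : (μ^2 - ((a:ℝ):ℂ) - ((b:ℝ):ℂ)*Complex.I) *
        (μ^2 - ((a:ℝ):ℂ) + ((b:ℝ):ℂ)*Complex.I) = 0 := by
      linear_combination hμ - ((b:ℝ):ℂ)^2*Complex.I_sq
    have hre2 : (μ^2).re = μ.re^2 - μ.im^2 := by
      rw [pow_two, Complex.mul_re]; ring
    have him2 : (μ^2).im = 2*μ.re*μ.im := by
      rw [pow_two, Complex.mul_im]; ring
    rcases mul_eq_zero.mp hf with h1 | h1
    · have h1' : μ^2 = ((a:ℝ):ℂ) + ((b:ℝ):ℂ)*Complex.I := by linear_combination h1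
      have e1 : μ.re^2 - μ.im^2 = a := by
        have := congrArg Complex.re h1'
        rw [hre2] at this; simpa using this
      have e2 : 2*μ.re*μ.im = b := by
        have := congrArg Complex.im h1'
        rw [him2] at this; simpa using this
      exact main μ.re μ.im e1 (by rw [e2])
    · have h1' : μ^2 = ((a:ℝ):ℂ) - ((b:ℝ):ℂ)*Complex.I := by linear_combination h1
      have e1 : μ.re^2 - μ.im^2 = a := by
        have := congrArg Complex.re h1'
        rw [hre2] at this; simpa using this
      have e2 : 2*μ.re*μ.im = -b := by
        have := congrArg Complex.im h1'
        rw [him2] at this; simpa using this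
      exact main μ.re μ.im e1 (by rw [e2]; ring)
end

section
/- (Eigenvalue structure in the shallow-saddle case) Let ω̄ > 0, δ̄ > 0 with δ̄ ≤ 2ω̄, and let P(λ) = λ⁴ + 2λ²(ω̄² - 1) + (ω̄² + 1)² - δ̄² over ℂ. Then there exist real numbers a ≥ 0 and b ≥ 0 such that the multiset of roots of P is { a+bi, a-bi, -a+bi, -a-bi }, and these satisfy (a² + b²)² = (ω̄² + 1)² - δ̄² and a² - b² = 1 - ω̄²; consequently 2a² = 1 - ω̄² + √((1 - ω̄²)² + 4ω̄² - δ̄²). -/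
open Complex

/-- **Eigenvalue structure in the shallow-saddle case.**  For `ω̄, δ̄ > 0` with `δ̄ ≤ 2ω̄`,
there are reals `a, b ≥ 0` such that the roots of
`P(λ) = λ⁴ + 2λ²(ω̄² - 1) + (ω̄² + 1)² - δ̄²` are exactly `±a ± bi` (with multiplicity,
i.e. `P` factors accordingly), and `(a² + b²)² = (ω̄² + 1)² - δ̄²`, `a² - b² = 1 - ω̄²`,
hence `2a² = 1 - ω̄² + √((1 - ω̄²)² + 4ω̄² - δ̄²)`. -/
theorem stmt13 (ωb δb : ℝ) (hωb : 0 < ωb) (hδb : 0 < δb) (hshallow : δb ≤ 2 * ωb) :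
    ∃ a b : ℝ, 0 ≤ a ∧ 0 ≤ b ∧
      (∀ z : ℂ,
        z ^ 4 + 2 * z ^ 2 * ((ωb : ℂ) ^ 2 - 1) + ((ωb : ℂ) ^ 2 + 1) ^ 2 - (δb : ℂ) ^ 2 =
          (z - ((a : ℂ) + (b : ℂ) * I)) * (z - ((a : ℂ) - (b : ℂ) * I)) *
          (z - (-(a : ℂ) + (b : ℂ) * I)) * (z - (-(a : ℂ) - (b : ℂ) * I))) ∧
      (a ^ 2 + b ^ 2) ^ 2 = (ωb ^ 2 + 1) ^ 2 - δb ^ 2 ∧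
      a ^ 2 - b ^ 2 = 1 - ωb ^ 2 ∧
      2 * a ^ 2 = 1 - ωb ^ 2 + Real.sqrt ((1 - ωb ^ 2) ^ 2 + 4 * ωb ^ 2 - δb ^ 2) := by
  set D : ℝ := (1 - ωb ^ 2) ^ 2 + 4 * ωb ^ 2 - δb ^ 2 with hD
  have hδ2 : δb ^ 2 ≤ 4 * ωb ^ 2 := by nlinarith
  have hD0 : 0 ≤ D := by nlinarith
  set s : ℝ := Real.sqrt D with hs
  have hs0 : 0 ≤ s := Real.sqrt_nonneg _
  have hs2 : s ^ 2 = D := Real.sq_sqrt hD0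
  have h1 : 1 - ωb ^ 2 ≤ s := by nlinarith
  have h2 : -(1 - ωb ^ 2) ≤ s := by nlinarith
  have ha0 : 0 ≤ (1 - ωb ^ 2 + s) / 2 := by linarith
  have hb0 : 0 ≤ (s - (1 - ωb ^ 2)) / 2 := by linarith
  set a : ℝ := Real.sqrt ((1 - ωb ^ 2 + s) / 2) with ha
  set b : ℝ := Real.sqrt ((s - (1 - ωb ^ 2)) / 2) with hb
  have ha2 : a ^ 2 = (1 - ωb ^ 2 + s) / 2 := Real.sq_sqrt ha0
  have hb2 : b ^ 2 = (s - (1 - ωb ^ 2)) / 2 := Real.sq_sqrt hb0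
  refine ⟨a, b, Real.sqrt_nonneg _, Real.sqrt_nonneg _, ?_, ?_, ?_, ?_⟩
  · intro z
    have hca : ((a : ℂ)) ^ 2 = (1 - (ωb : ℂ) ^ 2 + (s : ℂ)) / 2 := by
      rw [show ((a : ℂ)) ^ 2 = ((a ^ 2 : ℝ) : ℂ) by push_cast; ring, ha2]; push_cast; ring
    have hcb : ((b : ℂ)) ^ 2 = ((s : ℂ) - (1 - (ωb : ℂ) ^ 2)) / 2 := by
      rw [show ((b : ℂ)) ^ 2 = ((b ^ 2 : ℝ) : ℂ) by push_cast; ring, hb2]; push_cast; ring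
    have hcs : ((s : ℂ)) ^ 2 = (1 - (ωb : ℂ) ^ 2) ^ 2 + 4 * (ωb : ℂ) ^ 2 - (δb : ℂ) ^ 2 := by
      rw [show ((s : ℂ)) ^ 2 = ((s ^ 2 : ℝ) : ℂ) by push_cast; ring, hs2, hD]; push_cast; ring
    have hI : (I : ℂ) ^ 2 = -1 := I_sq
    have e1 : (z - ((a : ℂ) + (b : ℂ) * I)) * (z - ((a : ℂ) - (b : ℂ) * I)) *
          (z - (-(a : ℂ) + (b : ℂ) * I)) * (z - (-(a : ℂ) - (b : ℂ) * I)) =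
        (z ^ 2 - (a : ℂ) ^ 2) ^ 2 + 2 * (b : ℂ) ^ 2 * (z ^ 2 + (a : ℂ) ^ 2) + (b : ℂ) ^ 4 := by
      linear_combination (-2 * (b : ℂ) ^ 2 * (z ^ 2 + (a : ℂ) ^ 2) +
        (b : ℂ) ^ 4 * ((I : ℂ) ^ 2 - 1)) * hI
    rw [e1]
    linear_combination (2 * z ^ 2 - ((a : ℂ) ^ 2 + (b : ℂ) ^ 2 + (s : ℂ))) * hca +
      (-2 * z ^ 2 - ((a : ℂ) ^ 2 + (b : ℂ) ^ 2 + (s : ℂ))) * hcb - hcs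
  · rw [ha2, hb2]; nlinarith
  · rw [ha2, hb2]; ring
  · rw [ha2]; ring
end

section
/- (Necessary conditions for stability) Let ω̄ > 0, δ̄ > 0 and 0 < c < 1, and let P(λ) = λ⁴ + 2λ²(ω̄² - 1) + (ω̄² + 1)² - δ̄² over ℂ. If every root λ ∈ ℂ of P satisfies Re(λ) < c, then necessarily δ̄ > 2√(1 - c²) and ω̄ > √(1 - c²). -/
/-- Factorization helper: if `(μ² + ω̄² - 1)² = δ̄² - 4ω̄²`, then `μ` is a root of `P`. -/
lemma stmt14_aux (ωb δb : ℝ) (μ : ℂ)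
    (h : (μ ^ 2 + (ωb : ℂ) ^ 2 - 1) ^ 2 = (δb : ℂ) ^ 2 - 4 * (ωb : ℂ) ^ 2) :
    μ ^ 4 + 2 * μ ^ 2 * ((ωb : ℂ) ^ 2 - 1) + ((ωb : ℂ) ^ 2 + 1) ^ 2 - (δb : ℂ) ^ 2 = 0 := by
  linear_combination h

set_option maxHeartbeats 1600000 in
/-- **Necessary conditions for stability.**  For `ω̄, δ̄ > 0` and `0 < c < 1`, if every
complex root of `P(λ) = λ⁴ + 2λ²(ω̄² - 1) + (ω̄² + 1)² - δ̄²` has real part `< c`, then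
`δ̄ > 2√(1 - c²)` and `ω̄ > √(1 - c²)`. -/
theorem stmt14 (ωb δb c : ℝ) (hωb : 0 < ωb) (hδb : 0 < δb) (hc0 : 0 < c) (hc1 : c < 1)
    (hroots : ∀ μ : ℂ,
      μ ^ 4 + 2 * μ ^ 2 * ((ωb : ℂ) ^ 2 - 1) + ((ωb : ℂ) ^ 2 + 1) ^ 2 - (δb : ℂ) ^ 2 = 0 →
      μ.re < c) :
    δb > 2 * Real.sqrt (1 - c ^ 2) ∧ ωb > Real.sqrt (1 - c ^ 2) := by
  have hkey : ωb ^ 2 > 1 - c ^ 2 ∧ δb ^ 2 > 4 * (1 - c ^ 2) := by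
    rcases le_or_gt (4 * ωb ^ 2 - δb ^ 2) 0 with hE | hE
    · -- real branch: D := δb² - 4ωb² ≥ 0
      set D : ℝ := δb ^ 2 - 4 * ωb ^ 2 with hD
      have hD0 : 0 ≤ D := by linarith
      set sd : ℝ := Real.sqrt D with hsd
      have hsd0 : 0 ≤ sd := Real.sqrt_nonneg _
      have hsd2 : sd ^ 2 = D := Real.sq_sqrt hD0
      set s : ℝ := 1 - ωb ^ 2 + sd with hs
      have hslt : s < c ^ 2 := by
        rcases lt_or_ge 0 s with hspos | hsneg
        · -- take the real root μ = √s
          have hm2 : Real.sqrt s ^ 2 = s := Real.sq_sqrt hspos.le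
          have hroot : ((Real.sqrt s : ℂ)) ^ 4 + 2 * ((Real.sqrt s : ℂ)) ^ 2 *
              ((ωb : ℂ) ^ 2 - 1) + ((ωb : ℂ) ^ 2 + 1) ^ 2 - (δb : ℂ) ^ 2 = 0 := by
            apply stmt14_aux
            have hm2c : ((Real.sqrt s : ℝ) : ℂ) ^ 2 = (s : ℂ) := by exact_mod_cast hm2
            have hsd2c : ((sd : ℝ) : ℂ) ^ 2 = (δb : ℂ) ^ 2 - 4 * (ωb : ℂ) ^ 2 := by
              exact_mod_cast congrArg (fun t : ℝ => (t : ℂ)) hsd2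
            have hsc : (s : ℂ) = 1 - (ωb : ℂ) ^ 2 + (sd : ℂ) := by norm_num [hs]
            rw [hm2c, hsc]
            linear_combination hsd2c
          have hre := hroots _ hroot
          have hre' : Real.sqrt s < c := by simpa using hre
          have : Real.sqrt s ^ 2 < c ^ 2 :=
            pow_lt_pow_left₀ hre' (Real.sqrt_nonneg _) (by norm_num)
          rwa [hm2] at this
        · nlinarith
      constructor
      · nlinarith
      · nlinarith
    · -- complex branch: E := 4ωb² - δb² > 0
      set E : ℝ := 4 * ωb ^ 2 - δb ^ 2 with hEdef
      set a : ℝ := 1 - ωb ^ 2 with ha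
      set R : ℝ := Real.sqrt (a ^ 2 + E) with hR
      have hR0 : 0 ≤ R := Real.sqrt_nonneg _
      have hR2 : R ^ 2 = a ^ 2 + E := Real.sq_sqrt (by nlinarith)
      have hRa : |a| ≤ R := by
        rw [hR, ← Real.sqrt_sq_eq_abs]
        exact Real.sqrt_le_sqrt (by linarith)
      have hRpa : 0 ≤ (R + a) / 2 := by
        have := neg_abs_le a; linarith
      have hRma : 0 ≤ (R - a) / 2 := by
        have := le_abs_self a; linarith
      set x : ℝ := Real.sqrt ((R + a) / 2) with hx
      set y : ℝ := Real.sqrt ((R - a) / 2) with hy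
      have hx0 : 0 ≤ x := Real.sqrt_nonneg _
      have hx2 : x ^ 2 = (R + a) / 2 := Real.sq_sqrt hRpa
      have hy2 : y ^ 2 = (R - a) / 2 := Real.sq_sqrt hRma
      have hxx : x ^ 2 - y ^ 2 = 1 - ωb ^ 2 := by rw [hx2, hy2, ha]; ring
      have hxy : 4 * x ^ 2 * y ^ 2 = 4 * ωb ^ 2 - δb ^ 2 := by
        rw [hx2, hy2]
        have : R ^ 2 - a ^ 2 = E := by linarith
        nlinarith [this]
      set μ : ℂ := (x : ℂ) + (y : ℂ) * Complex.I with hμ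
      have h1 : ((x : ℂ)) ^ 2 - ((y : ℂ)) ^ 2 = 1 - (ωb : ℂ) ^ 2 := by exact_mod_cast hxx
      have h2 : 4 * ((x : ℂ)) ^ 2 * ((y : ℂ)) ^ 2 = 4 * (ωb : ℂ) ^ 2 - (δb : ℂ) ^ 2 := by
        exact_mod_cast hxy
      have hroot : μ ^ 4 + 2 * μ ^ 2 * ((ωb : ℂ) ^ 2 - 1) + ((ωb : ℂ) ^ 2 + 1) ^ 2
          - (δb : ℂ) ^ 2 = 0 := by
        apply stmt14_aux
        have e1 : μ ^ 2 + (ωb : ℂ) ^ 2 - 1 = 2 * x * y * Complex.I := by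
          rw [hμ]
          linear_combination h1 + ((y : ℂ)) ^ 2 * Complex.I_sq
        rw [e1]
        linear_combination 4 * ((x : ℂ)) ^ 2 * ((y : ℂ)) ^ 2 * Complex.I_sq - h2
      have hre := hroots _ hroot
      have hre' : x < c := by simpa [hμ] using hre
      clear hroots hroot hre h1 h2
      clear hμ μ
      have hx2c : x ^ 2 < c ^ 2 := pow_lt_pow_left₀ hre' hx0 (by norm_num)
      have hRlt : R < 2 * c ^ 2 - a := by rw [hx2] at hx2c; linarith
      have hR2lt : R ^ 2 < (2 * c ^ 2 - a) ^ 2 :=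
        pow_lt_pow_left₀ hRlt hR0 (by norm_num)
      -- E < 4c²(c² - a)
      have hexp : (2 * c ^ 2 - a) ^ 2 = 4 * c ^ 4 - 4 * c ^ 2 * a + a ^ 2 := by ring
      have hElt : E < 4 * c ^ 2 * (c ^ 2 - a) := by
        rw [hexp] at hR2lt; nlinarith [hR2, hR2lt]
      have hca : 0 < c ^ 2 - a := by
        by_contra h
        push_neg at h
        have : 4 * c ^ 2 * (c ^ 2 - a) ≤ 0 :=
          mul_nonpos_of_nonneg_of_nonpos (by positivity) h
        linarith
      have hw2 : ωb ^ 2 > 1 - c ^ 2 := by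
        rw [ha] at hca; linarith
      have h1c : 0 < 1 - c ^ 2 := by nlinarith [mul_pos hc0 hc0]
      constructor
      · exact hw2
      · -- δb² = 4ωb² - E > 4(1-c²)(ωb²+c²) > 4(1-c²)
        have := mul_pos h1c (show (0:ℝ) < ωb ^ 2 - (1 - c ^ 2) by linarith)
        nlinarith [hElt, hE]
  obtain ⟨hw2, hd2⟩ := hkey
  have ht0 : 0 ≤ Real.sqrt (1 - c ^ 2) := Real.sqrt_nonneg _
  have ht2 : Real.sqrt (1 - c ^ 2) ^ 2 = 1 - c ^ 2 := Real.sq_sqrt (by nlinarith)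
  constructor
  · refine lt_of_pow_lt_pow_left₀ 2 hδb.le ?_
    nlinarith
  · refine lt_of_pow_lt_pow_left₀ 2 hωb.le ?_
    nlinarith
end

section
/- (Stability criterion in original parameters, iff form) Let ε > 0, α > 0, c_μ > 0, c_δ > 0 and ω > 0; set ε̄ = √(ε² + αc_μ), and let A = [[0, I₂],[D(1, αc_δ/ε̄²) + (ω/ε̄)²I₂, -2(ω/ε̄)S]]. Then every eigenvalue λ ∈ ℂ of A satisfies Re(λ) < ε/ε̄ if and only if c_δ/c_μ > 2√(ε²/(αc_μ) + 1) and √(αc_μ)·√( √(c_δ²/c_μ² + 4(ε²/(αc_μ))(ε²/(αc_μ) + 1)) - 2ε²/(αc_μ) - 1 ) < ω < √(αc_μ)·√( c_δ²/(4c_μ²) - ε²/(αc_μ) ). -/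
open Matrix

/-- The 4×4 first-order system matrix of the normalized q-dynamics. -/
noncomputable def Amat (ωb δb : ℝ) : Matrix (Fin 2 ⊕ Fin 2) (Fin 2 ⊕ Fin 2) ℝ :=
  Matrix.fromBlocks 0 1 (Dmat 1 δb + (ωb ^ 2) • (1 : Matrix (Fin 2) (Fin 2) ℝ))
    (-((2 * ωb) • Smat))


/-!
The characteristic polynomial of `Amat w d` is `(λ² - (1 - w²))² - (d² - 4w²)`, so `λ²` runs over
the roots `z` of `(z - (1 - w²))² = d² - 4w²`. Both square roots of `z` have real part `< c` iff
`‖z‖ + Re z < 2c²`, because `2 (Re λ)² = ‖λ²‖ + Re λ²`. Evaluated on the two roots `z` (a real pair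
if `d² ≥ 4w²`, a complex-conjugate pair otherwise) this gives, in both cases, the same three
polynomial inequalities in `w²`, `c²` and `d`. With `r = ε²/(αc_μ)` the normalized parameters are
`(ω²/(αc_μ))/(1 + r)`, `r/(1 + r)` and `(c_δ/c_μ)/(1 + r)`; clearing the common factor `1 + r` and
solving the inequalities for `ω` gives the stated window.
-/

lemma hasEigenvalue_toLin'_iff_det_eq_zero {n K : Type*} [Fintype n] [DecidableEq n] [Field K]
    (N : Matrix n n K) (μ : K) :
    Module.End.HasEigenvalue (toLin' N) μ ↔ (scalar n μ - N).det = 0 := by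
  rw [Module.End.hasEigenvalue_iff_isRoot_charpoly, charpoly_toLin', Polynomial.IsRoot,
    eval_charpoly]

lemma forall_sq_sub_eq_sq_imp_iff {R : Type*} [CommRing R] [NoZeroDivisors R] {a s : R}
    {P : R → Prop} : (∀ z : R, (z - a) ^ 2 = s ^ 2 → P z) ↔ P (a + s) ∧ P (a - s) := by
  refine ⟨fun H ↦ ⟨H _ (by ring), H _ (by ring)⟩, fun ⟨h₁, h₂⟩ z hz ↦ ?_⟩
  rcases sq_eq_sq_iff_eq_or_eq_neg.1 hz with h | h
  · rwa [show z = a + s by linear_combination h]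
  · rwa [show z = a - s by linear_combination h]

lemma abs_add_self_lt_two_mul_iff {x k : ℝ} (hk : 0 < k) : |x| + x < 2 * k ↔ x < k := by
  rcases abs_cases x with ⟨h, -⟩ | ⟨h, _⟩ <;> rw [h] <;> constructor <;> intro <;> linarith

namespace Real

lemma add_sqrt_lt_iff {a b x : ℝ} : a + √x < b ↔ a < b ∧ x < (b - a) ^ 2 := by
  rw [← lt_sub_iff_add_lt']
  refine ⟨fun h ↦ ?_, fun ⟨hab, h⟩ ↦ (sqrt_lt' (sub_pos.2 hab)).2 h⟩
  have hab : 0 < b - a := (sqrt_nonneg x).trans_lt h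
  exact ⟨sub_pos.1 hab, (sqrt_lt' hab).1 h⟩

lemma lt_sqrt_mul_sqrt_iff {m x y : ℝ} (hm : 0 < m) (hx : 0 ≤ x) :
    x < √m * √y ↔ x ^ 2 / m < y := by
  rw [← sqrt_mul hm.le, lt_sqrt hx, div_lt_iff₀' hm]

lemma sqrt_mul_sqrt_lt_iff {m x y : ℝ} (hm : 0 < m) (hx : 0 < x) :
    √m * √y < x ↔ y < x ^ 2 / m := by
  rw [← sqrt_mul hm.le, sqrt_lt' hx, lt_div_iff₀' hm]

end Real

namespace Complex

lemma two_mul_re_sq_eq_norm_add_re {μ z : ℂ} (h : μ ^ 2 = z) : 2 * μ.re ^ 2 = ‖z‖ + z.re := by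
  rw [← h, norm_pow, Complex.sq_norm, normSq_apply, sq μ, mul_re]
  ring

lemma forall_sq_eq_re_lt_iff (z : ℂ) {c : ℝ} (hc : 0 < c) :
    (∀ μ : ℂ, μ ^ 2 = z → μ.re < c) ↔ ‖z‖ + z.re < 2 * c ^ 2 := by
  refine ⟨fun H ↦ ?_, fun H μ hμ ↦ by nlinarith [two_mul_re_sq_eq_norm_add_re hμ]⟩
  obtain ⟨μ, hμ⟩ := IsAlgClosed.exists_pow_nat_eq z two_pos
  have h₁ := H μ hμ
  have h₂ := H (-μ) (by rw [neg_sq, hμ])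
  rw [neg_re] at h₂
  nlinarith [two_mul_re_sq_eq_norm_add_re hμ]

lemma forall_quartic_re_lt_iff {a D : ℂ} {c : ℝ} (hc : 0 < c) :
    (∀ μ : ℂ, (μ ^ 2 - a) ^ 2 = D → μ.re < c) ↔
      ∀ z : ℂ, (z - a) ^ 2 = D → ‖z‖ + z.re < 2 * c ^ 2 :=
  ⟨fun H z hz ↦ (forall_sq_eq_re_lt_iff z hc).1 fun μ hμ ↦ H μ (hμ ▸ hz),
    fun H μ hμ ↦ (forall_sq_eq_re_lt_iff _ hc).2 (H _ hμ) μ rfl⟩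

lemma forall_sq_sub_eq_norm_add_re_lt_iff_of_nonneg {a D k : ℝ} (hD : 0 ≤ D) (hk : 0 < k) :
    (∀ z : ℂ, (z - a) ^ 2 = D → ‖z‖ + z.re < 2 * k) ↔ a + √D < k := by
  have hD' : (D : ℂ) = (√D : ℂ) ^ 2 := by rw [← ofReal_pow, Real.sq_sqrt hD]
  rw [hD', forall_sq_sub_eq_sq_imp_iff, ← ofReal_add, ← ofReal_sub]
  simp only [norm_real, Real.norm_eq_abs, ofReal_re, abs_add_self_lt_two_mul_iff hk]
  have := Real.sqrt_nonneg D
  exact ⟨And.left, fun h ↦ ⟨h, by linarith⟩⟩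

lemma forall_sq_sub_eq_norm_add_re_lt_iff_of_neg {a D k : ℝ} (hD : D < 0) :
    (∀ z : ℂ, (z - a) ^ 2 = D → ‖z‖ + z.re < 2 * k) ↔ √(a ^ 2 - D) + a < 2 * k := by
  have hs : √(-D) ^ 2 = -D := Real.sq_sqrt (neg_nonneg.2 hD.le)
  have hD' : (D : ℂ) = (√(-D) * I) ^ 2 := by
    rw [mul_pow, I_sq, ← ofReal_pow, hs]
    push_cast
    ring
  have hconj : (a : ℂ) - √(-D) * I = a + ((-√(-D) : ℝ) : ℂ) * I := by push_cast; ring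
  rw [hD', forall_sq_sub_eq_sq_imp_iff, hconj]
  simp only [norm_add_mul_I, neg_sq, hs, ← sub_eq_add_neg, add_re, ofReal_re, mul_I_re, ofReal_im,
    neg_zero, add_zero, and_self]

end Complex

def StabilityConditions (u k d : ℝ) : Prop :=
  4 * (1 - k) < d ^ 2 ∧ 4 * (1 - k) * (u + k) < d ^ 2 ∧ d ^ 2 + 4 * k < (u + 1 + k) ^ 2

section StabilityConditions

variable {u k d : ℝ}

lemma stabilityConditions_iff_of_nonneg (hu : 0 < u) (hk : 0 < k) (hD : 0 ≤ d ^ 2 - 4 * u) :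
    (1 - u) + √(d ^ 2 - 4 * u) < k ↔ StabilityConditions u k d := by
  rw [Real.add_sqrt_lt_iff, StabilityConditions]
  constructor
  · rintro ⟨h₁, h₂⟩
    exact ⟨by nlinarith, by nlinarith, by nlinarith⟩
  · rintro ⟨c₁, c₂, c₃⟩
    have huk : 1 < u + k := by
      by_contra! h
      nlinarith [mul_nonneg (sub_nonneg.2 h) (by linarith : (0:ℝ) ≤ 3 + u + k)]
    exact ⟨by linarith, by nlinarith⟩

lemma stabilityConditions_iff_of_neg (hk : 0 < k) (hD : d ^ 2 - 4 * u < 0) :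
    √((1 - u) ^ 2 - (d ^ 2 - 4 * u)) + (1 - u) < 2 * k ↔ StabilityConditions u k d := by
  rw [add_comm, Real.add_sqrt_lt_iff, StabilityConditions]
  constructor
  · rintro ⟨h₁, h₂⟩
    have c₂ : 4 * (1 - k) * (u + k) < d ^ 2 := by nlinarith
    have huk : 1 < u + k := by nlinarith
    exact ⟨by nlinarith, c₂, by nlinarith [sq_nonneg (u + k - 1)]⟩
  · rintro ⟨-, c₂, -⟩
    have huk : 1 < u + k := by nlinarith
    exact ⟨by linarith, by nlinarith⟩

lemma stabilityConditions_div_iff {W r ρ : ℝ} (hr : 0 < 1 + r) :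
    StabilityConditions (W / (1 + r)) (r / (1 + r)) (ρ / (1 + r)) ↔
      4 * (1 + r) < ρ ^ 2 ∧ 4 * (W + r) < ρ ^ 2 ∧
        ρ ^ 2 + 4 * r * (r + 1) < (W + 1 + 2 * r) ^ 2 := by
  have e₁ : 4 * (1 - r / (1 + r)) = 4 * (1 + r) / (1 + r) ^ 2 := by field_simp; ring
  have e₂ : 4 * (1 - r / (1 + r)) * (W / (1 + r) + r / (1 + r)) = 4 * (W + r) / (1 + r) ^ 2 := by
    field_simp; ring
  have e₃ : (ρ / (1 + r)) ^ 2 + 4 * (r / (1 + r)) = (ρ ^ 2 + 4 * r * (r + 1)) / (1 + r) ^ 2 := by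
    field_simp; ring
  have e₄ : W / (1 + r) + 1 + r / (1 + r) = (W + 1 + 2 * r) / (1 + r) := by field_simp; ring
  have hr2 : 0 < (1 + r) ^ 2 := by positivity
  rw [StabilityConditions, e₂, e₁, e₃, e₄, div_pow, div_pow, div_lt_div_iff_of_pos_right hr2,
    div_lt_div_iff_of_pos_right hr2, div_lt_div_iff_of_pos_right hr2]

end StabilityConditions

lemma stability_window_iff {m r ρ ω : ℝ} (hm : 0 < m) (hr : 0 ≤ r) (hρ : 0 < ρ) (hω : 0 < ω) :
    4 * (1 + r) < ρ ^ 2 ∧ 4 * (ω ^ 2 / m + r) < ρ ^ 2 ∧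
        ρ ^ 2 + 4 * r * (r + 1) < (ω ^ 2 / m + 1 + 2 * r) ^ 2 ↔
      2 * √(r + 1) < ρ ∧ √m * √(√(ρ ^ 2 + 4 * r * (r + 1)) - 2 * r - 1) < ω ∧
        ω < √m * √(ρ ^ 2 / 4 - r) := by
  have h₁ : 2 * √(r + 1) < ρ ↔ 4 * (1 + r) < ρ ^ 2 := by
    rw [← pow_lt_pow_iff_left₀ (by positivity) hρ.le two_ne_zero, mul_pow,
      Real.sq_sqrt (by positivity), add_comm r]
    norm_num
  have h₂ : √(ρ ^ 2 + 4 * r * (r + 1)) - 2 * r - 1 < ω ^ 2 / m ↔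
      ρ ^ 2 + 4 * r * (r + 1) < (ω ^ 2 / m + 1 + 2 * r) ^ 2 := by
    rw [sub_sub, sub_lt_iff_lt_add, ← Real.sqrt_lt' (by positivity)]
    ring_nf
  have h₃ : ω ^ 2 / m < ρ ^ 2 / 4 - r ↔ 4 * (ω ^ 2 / m + r) < ρ ^ 2 := by
    constructor <;> intro <;> linarith
  rw [Real.sqrt_mul_sqrt_lt_iff hm hω, Real.lt_sqrt_mul_sqrt_iff hm hω.le, h₁, h₂, h₃]
  tauto

lemma det_scalar_sub_Amat (w d : ℝ) (μ : ℂ) :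
    (scalar _ μ - (Amat w d).map (algebraMap ℝ ℂ)).det
      = (μ ^ 2 - (1 - w ^ 2 : ℝ)) ^ 2 - (d ^ 2 - 4 * w ^ 2 : ℝ) := by
  have h : (scalar _ μ - (Amat w d).map (algebraMap ℝ ℂ)).submatrix
      (finSumFinEquiv (m := 2) (n := 2)).symm (finSumFinEquiv (m := 2) (n := 2)).symm
      = !![μ, 0, -1, 0; 0, μ, 0, -1;
           -(1 - d + w ^ 2 : ℂ), 0, μ, -(2 * w : ℂ); 0, -(1 + d + w ^ 2 : ℂ), (2 * w : ℂ), μ] := by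
    ext i j
    fin_cases i <;> fin_cases j <;>
      simp [Amat, Smat, Dmat, fromBlocks, finSumFinEquiv, Fin.addCases, Fin.subNat, Fin.castLT]
  rw [← det_submatrix_equiv_self finSumFinEquiv.symm, h]
  simp [det_succ_row_zero, Fin.sum_univ_succ, Fin.succAbove_of_le_castSucc,
    Fin.succAbove_of_castSucc_lt]
  ring

lemma hasEigenvalue_Amat_iff (w d : ℝ) (μ : ℂ) :
    Module.End.HasEigenvalue (toLin' ((Amat w d).map (algebraMap ℝ ℂ))) μ ↔
      (μ ^ 2 - (1 - w ^ 2 : ℝ)) ^ 2 = (d ^ 2 - 4 * w ^ 2 : ℝ) := by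
  rw [hasEigenvalue_toLin'_iff_det_eq_zero, det_scalar_sub_Amat, sub_eq_zero]

theorem Amat_eigenvalue_re_lt_iff {w d c : ℝ} (hw : w ≠ 0) (hc : 0 < c) :
    (∀ μ : ℂ, Module.End.HasEigenvalue (toLin' ((Amat w d).map (algebraMap ℝ ℂ))) μ →
      μ.re < c) ↔ StabilityConditions (w ^ 2) (c ^ 2) d := by
  simp only [hasEigenvalue_Amat_iff]
  rw [Complex.forall_quartic_re_lt_iff hc]
  rcases le_or_gt 0 (d ^ 2 - 4 * w ^ 2) with hD | hD
  · rw [Complex.forall_sq_sub_eq_norm_add_re_lt_iff_of_nonneg hD (by positivity),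
      stabilityConditions_iff_of_nonneg (by positivity) (by positivity) hD]
  · rw [Complex.forall_sq_sub_eq_norm_add_re_lt_iff_of_neg hD,
      stabilityConditions_iff_of_neg (by positivity) hD]

/-- **Stability criterion in original parameters (iff form).**  With `ε̄ = √(ε² + αc_μ)`,
every complex eigenvalue of the q-dynamics matrix `A` (with `ω̄ = ω/ε̄`, `δ̄ = αc_δ/ε̄²`)
has real part `< ε/ε̄` iff `c_δ/c_μ > 2√(ε²/(αc_μ) + 1)` and `ω` lies in the stated
frequency window. -/
theorem stmt16 (ε α cμ cδ ω : ℝ) (hε : 0 < ε) (hα : 0 < α) (hcμ : 0 < cμ) (hcδ : 0 < cδ)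
    (hω : 0 < ω) (εb : ℝ) (hεb : εb = Real.sqrt (ε ^ 2 + α * cμ)) :
    (∀ μ : ℂ, Module.End.HasEigenvalue
        (Matrix.toLin' ((Amat (ω / εb) (α * cδ / εb ^ 2)).map (algebraMap ℝ ℂ))) μ →
      μ.re < ε / εb) ↔
    (cδ / cμ > 2 * Real.sqrt (ε ^ 2 / (α * cμ) + 1) ∧
      Real.sqrt (α * cμ) * Real.sqrt (Real.sqrt (cδ ^ 2 / cμ ^ 2
        + 4 * (ε ^ 2 / (α * cμ)) * (ε ^ 2 / (α * cμ) + 1))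
        - 2 * (ε ^ 2 / (α * cμ)) - 1) < ω ∧
      ω < Real.sqrt (α * cμ) * Real.sqrt (cδ ^ 2 / (4 * cμ ^ 2) - ε ^ 2 / (α * cμ))) := by
  have hm : 0 < α * cμ := mul_pos hα hcμ
  set r := ε ^ 2 / (α * cμ) with hr_def
  set ρ := cδ / cμ with hρ_def
  have hr : 0 < r := by positivity
  have hεb2 : εb ^ 2 = α * cμ * (1 + r) := by
    rw [hεb, Real.sq_sqrt (by positivity), hr_def]
    field_simp
    ring
  have hεb0 : 0 < εb := hεb ▸ Real.sqrt_pos.2 (by positivity)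
  have hw : (ω / εb) ^ 2 = ω ^ 2 / (α * cμ) / (1 + r) := by rw [div_pow, hεb2, div_div]
  have hc : (ε / εb) ^ 2 = r / (1 + r) := by rw [div_pow, hεb2, ← div_div]
  have hd : α * cδ / εb ^ 2 = ρ / (1 + r) := by rw [hεb2, hρ_def]; field_simp
  rw [Amat_eigenvalue_re_lt_iff (by positivity) (by positivity), hw, hc, hd,
    stabilityConditions_div_iff (by positivity), ← div_pow cδ,
    show cδ ^ 2 / (4 * cμ ^ 2) = ρ ^ 2 / 4 by rw [hρ_def]; ring, gt_iff_lt]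
  exact stability_window_iff hm hr.le (by positivity) hω
end
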